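/- arXiv:0805.2821 — 5 statements merged into one kernel-verified Lean document; each statement's English description precedes it below -/
import Mathlib

section
/- Let H be a complex Hilbert space and let T₁, T₂ be bounded self-adjoint operators on H with 0 ≤ T₂ ≤ T₁ ≤ I in the Loewner order. Then for every bounded operator A on H there exists a bounded operator B on H with ‖B‖ ≤ ‖A‖ such that (I − T₁)^{1/2} A (I − T₁)^{1/2} = (I − T₂)^{1/2} B (I − T₂)^{1/2}. In particular the set (I − T₁)^{1/2} B(H) (I − T₁)^{1/2} is contained in the set (I − T₂)^{1/2} B(H) (I − T₂)^{1/2}. -/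
/-!
Since `1 - T₁ ≤ 1 - T₂`, we have `‖(1 - T₁)^{1/2} x‖ ≤ ‖(1 - T₂)^{1/2} x‖` for every `x`, so by
Douglas' factorization lemma `(1 - T₁)^{1/2} = D (1 - T₂)^{1/2}` for a contraction `D`. Taking
adjoints also `(1 - T₁)^{1/2} = (1 - T₂)^{1/2} D*`, hence `B = D* A D` works.
-/

open ContinuousLinearMap

section Douglas

variable {𝕜 E F H : Type*} [RCLike 𝕜] [NormedAddCommGroup E] [NormedSpace 𝕜 E]
  [NormedAddCommGroup F] [NormedSpace 𝕜 F] [CompleteSpace F]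
  [NormedAddCommGroup H] [InnerProductSpace 𝕜 H] [CompleteSpace H]

theorem ContinuousLinearMap.exists_norm_le_comp_eq_of_norm_apply_le {R₁ : E →L[𝕜] F}
    {R₂ : E →L[𝕜] H} {C : ℝ} (hC : 0 ≤ C) (hle : ∀ x, ‖R₁ x‖ ≤ C * ‖R₂ x‖) :
    ∃ D : H →L[𝕜] F, ‖D‖ ≤ C ∧ D ∘L R₂ = R₁ := by
  set K := (LinearMap.range (R₂ : E →ₗ[𝕜] H)).topologicalClosure
  have : CompleteSpace K := (Submodule.isClosed_topologicalClosure _).completeSpace_coe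
  let e : E →ₗ[𝕜] K := (R₂ : E →ₗ[𝕜] H).codRestrict K fun x ↦
    (LinearMap.range (R₂ : E →ₗ[𝕜] H)).le_topologicalClosure (LinearMap.mem_range_self _ x)
  have he : DenseRange e := by
    rw [DenseRange, Subtype.dense_iff, ← Set.range_comp]
    exact (Submodule.topologicalClosure_coe _).le
  -- `D₀` is `R₂ x ↦ R₁ x` on the range of `R₂`, extended by continuity to its closure `K`;
  -- composing with the orthogonal projection onto `K` extends it by zero.
  let D₀ := (R₁ : E →ₗ[𝕜] F).extendOfNorm e
  refine ⟨D₀ ∘L K.orthogonalProjectionOnto, ?_, ?_⟩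
  · calc ‖D₀ ∘L K.orthogonalProjectionOnto‖ ≤ ‖D₀‖ * ‖K.orthogonalProjectionOnto‖ :=
          opNorm_comp_le _ _
      _ ≤ C * 1 := by
          gcongr
          exacts [LinearMap.opNorm_extendOfNorm_le he hC hle, K.orthogonalProjectionOnto_norm_le]
      _ = C := mul_one C
  · ext x
    have : K.orthogonalProjectionOnto (R₂ x) = e x :=
      K.orthogonalProjectionOnto_mem_subspace_eq_self (e x)
    exact (congrArg D₀ this).trans (LinearMap.extendOfNorm_eq he ⟨C, hle⟩ x)

end Douglas

section Loewner

variable {𝕜 E F : Type*} [RCLike 𝕜]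
  [NormedAddCommGroup E] [InnerProductSpace 𝕜 E] [CompleteSpace E]
  [NormedAddCommGroup F] [InnerProductSpace 𝕜 F] [CompleteSpace F]

theorem ContinuousLinearMap.norm_apply_le_of_adjoint_comp_self_le {R₁ R₂ : E →L[𝕜] F}
    (h : adjoint R₁ ∘L R₁ ≤ adjoint R₂ ∘L R₂) (x : E) : ‖R₁ x‖ ≤ ‖R₂ x‖ := by
  have := h.re_inner_nonneg_left x
  rw [sub_apply, inner_sub_left, map_sub, sub_nonneg, ← apply_norm_sq_eq_inner_adjoint_left,
    ← apply_norm_sq_eq_inner_adjoint_left] at this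
  exact pow_le_pow_iff_left₀ (norm_nonneg _) (norm_nonneg _) two_ne_zero |>.mp this

end Loewner

theorem ContinuousLinearMap.norm_sqrt_apply_le_of_le {H : Type*} [NormedAddCommGroup H]
    [InnerProductSpace ℂ H] [CompleteSpace H] {S₁ S₂ : H →L[ℂ] H} (hS₁ : 0 ≤ S₁) (h : S₁ ≤ S₂)
    (x : H) : ‖CFC.sqrt S₁ x‖ ≤ ‖CFC.sqrt S₂ x‖ := by
  have hsq : ∀ S : H →L[ℂ] H, 0 ≤ S → adjoint (CFC.sqrt S) ∘L CFC.sqrt S = S := fun S hS ↦ by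
    rw [← star_eq_adjoint, (CFC.sqrt_nonneg S).isSelfAdjoint.star_eq]
    exact CFC.sqrt_mul_sqrt_self S hS
  apply norm_apply_le_of_adjoint_comp_self_le
  rwa [hsq S₁ hS₁, hsq S₂ (hS₁.trans h)]

theorem IsSelfAdjoint.mul_mul_eq_of_mul_eq {R : Type*} [NonUnitalSemiring R] [StarRing R]
    {a b d : R} (ha : IsSelfAdjoint a) (hb : IsSelfAdjoint b) (h : d * b = a) (x : R) :
    a * x * a = b * (star d * x * d) * b := by
  have h' : b * star d = a := by simpa [hb.star_eq, ha.star_eq] using congrArg star h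
  calc a * x * a = b * star d * x * (d * b) := by rw [h, h']
    _ = b * (star d * x * d) * b := by simp only [mul_assoc]

theorem norm_star_mul_mul_le {R : Type*} [NonUnitalNormedRing R] [StarRing R] [NormedStarGroup R]
    (d x : R) : ‖star d * x * d‖ ≤ ‖d‖ ^ 2 * ‖x‖ :=
  calc ‖star d * x * d‖ ≤ ‖d‖ * ‖x‖ * ‖d‖ := by
        grw [norm_mul_le, norm_mul_le, norm_star]
    _ = ‖d‖ ^ 2 * ‖x‖ := by ring

theorem stmt1_general {H : Type*} [NormedAddCommGroup H] [InnerProductSpace ℂ H] [CompleteSpace H]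
    (T₁ T₂ : H →L[ℂ] H) (h21 : T₂ ≤ T₁) (hI : T₁ ≤ 1) :
    (∀ A : H →L[ℂ] H, ∃ B : H →L[ℂ] H, ‖B‖ ≤ ‖A‖ ∧
      CFC.sqrt (1 - T₁) * A * CFC.sqrt (1 - T₁)
        = CFC.sqrt (1 - T₂) * B * CFC.sqrt (1 - T₂)) ∧
    { X : H →L[ℂ] H | ∃ A : H →L[ℂ] H, X = CFC.sqrt (1 - T₁) * A * CFC.sqrt (1 - T₁) }
      ⊆ { X : H →L[ℂ] H | ∃ B : H →L[ℂ] H, X = CFC.sqrt (1 - T₂) * B * CFC.sqrt (1 - T₂) } := by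
  have hS₁ : 0 ≤ 1 - T₁ := sub_nonneg.2 hI
  have hS : 1 - T₁ ≤ 1 - T₂ := sub_le_sub_left h21 1
  obtain ⟨D, hD, hDR⟩ := exists_norm_le_comp_eq_of_norm_apply_le zero_le_one fun x ↦ by
    simpa only [one_mul] using norm_sqrt_apply_le_of_le hS₁ hS x
  have sandwich (A : H →L[ℂ] H) : CFC.sqrt (1 - T₁) * A * CFC.sqrt (1 - T₁)
      = CFC.sqrt (1 - T₂) * (star D * A * D) * CFC.sqrt (1 - T₂) :=
    (CFC.sqrt_nonneg _).isSelfAdjoint.mul_mul_eq_of_mul_eq (CFC.sqrt_nonneg _).isSelfAdjoint hDR A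
  refine ⟨fun A ↦ ⟨star D * A * D, ?_, sandwich A⟩, ?_⟩
  · calc ‖star D * A * D‖ ≤ ‖D‖ ^ 2 * ‖A‖ := norm_star_mul_mul_le D A
      _ ≤ ‖A‖ := mul_le_of_le_one_left (norm_nonneg A) (pow_le_one₀ (norm_nonneg D) hD)
  · rintro X ⟨A, rfl⟩
    exact ⟨_, sandwich A⟩

/-- If `0 ≤ T₂ ≤ T₁ ≤ I` are bounded self-adjoint operators on a complex Hilbert space `H`,
then for every bounded operator `A` there is `B` with `‖B‖ ≤ ‖A‖` and
`(I − T₁)^{1/2} A (I − T₁)^{1/2} = (I − T₂)^{1/2} B (I − T₂)^{1/2}`; in particular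
`(I − T₁)^{1/2} B(H) (I − T₁)^{1/2} ⊆ (I − T₂)^{1/2} B(H) (I − T₂)^{1/2}`. -/
theorem stmt1 {H : Type*} [NormedAddCommGroup H] [InnerProductSpace ℂ H] [CompleteSpace H]
    (T₁ T₂ : H →L[ℂ] H) (h1 : IsSelfAdjoint T₁) (h2 : IsSelfAdjoint T₂)
    (h0 : 0 ≤ T₂) (h21 : T₂ ≤ T₁) (hI : T₁ ≤ 1) :
    (∀ A : H →L[ℂ] H, ∃ B : H →L[ℂ] H, ‖B‖ ≤ ‖A‖ ∧
      CFC.sqrt (1 - T₁) * A * CFC.sqrt (1 - T₁)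
        = CFC.sqrt (1 - T₂) * B * CFC.sqrt (1 - T₂)) ∧
    { X : H →L[ℂ] H | ∃ A : H →L[ℂ] H, X = CFC.sqrt (1 - T₁) * A * CFC.sqrt (1 - T₁) }
      ⊆ { X : H →L[ℂ] H | ∃ B : H →L[ℂ] H, X = CFC.sqrt (1 - T₂) * B * CFC.sqrt (1 - T₂) } :=
  stmt1_general T₁ T₂ h21 hI
end

section
/- Let a, b, c, a', b', c' be complex numbers with |a| < 1 and |a'| < 1. Then the real number r := (1 − |a'|²)^{-1} |conj(a') b' + c'|² + (1 − |a|²)^{-1} |b'(1 − |a|²) − conj(a) b − c|² − (1 − |a a'|²)^{-1} |conj(a a')(a b' + b) + conj(a') c + c'|² is nonnegative. -/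
/-!
With `u = conj a' * b' + c'` and `v = b' * (1 - |a|²) - conj a * b - c`, the vector in the third
term is `u - conj a' * v`, so its norm is at most `|u| + |a'| |v|`. Since
`1 - |a a'|² = (1 - |a'|²) + |a'|² (1 - |a|²)`, the claim is then the two-term Cauchy–Schwarz
(Sedrakyan) inequality `(x + t y)² / (p + t² q) ≤ x² / p + y² / q`.
-/

theorem inv_mul_add_mul_sq_le {K : Type*} [Field K] [LinearOrder K] [IsStrictOrderedRing K]
    {p q : K} (hp : 0 < p) (hq : 0 < q) (x y t : K) :
    (p + t ^ 2 * q)⁻¹ * (x + t * y) ^ 2 ≤ p⁻¹ * x ^ 2 + q⁻¹ * y ^ 2 := by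
  rw [inv_mul_le_iff₀ (by positivity), ← sub_nonneg]
  have hgap : (p + t ^ 2 * q) * (p⁻¹ * x ^ 2 + q⁻¹ * y ^ 2) - (x + t * y) ^ 2
      = (t * q * x - p * y) ^ 2 / (p * q) := by
    field_simp
    ring
  rw [hgap]
  positivity

/-- The correction term `r` appearing in the composition law for the parameters
`(a,b,c,y)` of contractive local cocycles is nonnegative whenever `|a| < 1` and `|a'| < 1`. -/
theorem stmt2 (a b c a' b' c' : ℂ) (ha : ‖a‖ < 1) (ha' : ‖a'‖ < 1) :
    0 ≤ (1 - ‖a'‖ ^ 2)⁻¹ * ‖(starRingEnd ℂ) a' * b' + c'‖ ^ 2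
      + (1 - ‖a‖ ^ 2)⁻¹ * ‖b' * ((1 : ℂ) - (‖a‖ : ℂ) ^ 2) - (starRingEnd ℂ) a * b - c‖ ^ 2
      - (1 - ‖a * a'‖ ^ 2)⁻¹
          * ‖(starRingEnd ℂ) (a * a') * (a * b' + b) + (starRingEnd ℂ) a' * c + c'‖ ^ 2 := by
  have hw : (starRingEnd ℂ) (a * a') * (a * b' + b) + (starRingEnd ℂ) a' * c + c'
      = ((starRingEnd ℂ) a' * b' + c')
        - (starRingEnd ℂ) a' * (b' * ((1 : ℂ) - (‖a‖ : ℂ) ^ 2) - (starRingEnd ℂ) a * b - c) := by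
    rw [map_mul, ← Complex.mul_conj']
    ring
  set u := (starRingEnd ℂ) a' * b' + c'
  set v := b' * ((1 : ℂ) - (‖a‖ : ℂ) ^ 2) - (starRingEnd ℂ) a * b - c
  have hp : 0 < 1 - ‖a'‖ ^ 2 := sub_pos.2 (pow_lt_one₀ (norm_nonneg _) ha' two_ne_zero)
  have hq : 0 < 1 - ‖a‖ ^ 2 := sub_pos.2 (pow_lt_one₀ (norm_nonneg _) ha two_ne_zero)
  have hpq : 1 - ‖a * a'‖ ^ 2 = (1 - ‖a'‖ ^ 2) + ‖a'‖ ^ 2 * (1 - ‖a‖ ^ 2) := by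
    rw [norm_mul]
    ring
  rw [hw, hpq, sub_nonneg]
  calc _ ≤ ((1 - ‖a'‖ ^ 2) + ‖a'‖ ^ 2 * (1 - ‖a‖ ^ 2))⁻¹ * (‖u‖ + ‖a'‖ * ‖v‖) ^ 2 := by
        gcongr
        calc ‖u - (starRingEnd ℂ) a' * v‖ ≤ ‖u‖ + ‖(starRingEnd ℂ) a' * v‖ := norm_sub_le _ _
          _ = ‖u‖ + ‖a'‖ * ‖v‖ := by rw [norm_mul, RCLike.norm_conj]
    _ ≤ _ := inv_mul_add_mul_sq_le hp hq _ _ _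
end

section
/- Let H be a complex Hilbert space, let α : B(H) → B(H) be a linear map which is positive (α(A) ≥ 0 whenever A ≥ 0) and unital (α(I) = I), and let V be an isometry on H (V*V = I). Then the following are equivalent: (1) α(A) V = V A for every A ∈ B(H); (2) V A V* ≤ α(A) for every A ≥ 0 in B(H). Moreover, when these hold, α(A) = V A V* + (I − V V*) α(A) (I − V V*) for every A ∈ B(H). -/
/-!
A positive linear map on a C⋆-algebra is star-preserving, so intertwining `α a * v = v * a`
also gives `star v * α a = a * star v`; compressing `α a` by `v v*` and its complement then yields
`α a = v a v* + P (α a) P` with `P = 1 - v v*`, whence `v a v* ≤ α a` for `a ≥ 0`.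

Conversely, for `a ≥ 0` the inequality applied to `a` and to `‖a‖ - a`, compressed by `v`, gives
`v* (α a) v = a` (this is where unitality enters). So the positive element `D = α a - v a v*`
satisfies `v* D v = 0`, hence `D v = 0`, i.e. `α a v = v a`. Both sides are linear in `a`, and a
C⋆-algebra is spanned by its positive elements.
-/

open ContinuousLinearMap
open scoped ComplexStarModule

theorem LinearMap.map_star_of_map_nonneg {A B : Type*} [CStarAlgebra A] [PartialOrder A]
    [StarOrderedRing A] [CStarAlgebra B] [PartialOrder B] [StarOrderedRing B]
    (f : A →ₗ[ℂ] B) (hf : ∀ a, 0 ≤ a → 0 ≤ f a) (a : A) :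
    f (star a) = star (f a) := by
  have hsa : ∀ x : A, IsSelfAdjoint x → star (f x) = f x :=
    fun x hx ↦ (hx.map' (PositiveLinearMap.mk₀ f hf)).star_eq
  conv_lhs => rw [← realPart_add_I_smul_imaginaryPart a]
  conv_rhs => rw [← realPart_add_I_smul_imaginaryPart a]
  simp [star_add, star_smul, (ℜ a).2.star_eq, (ℑ a).2.star_eq, hsa _ (ℜ a).2, hsa _ (ℑ a).2]

theorem mul_eq_zero_of_star_mul_mul_eq_zero {A : Type*} [CStarAlgebra A] [PartialOrder A]
    [StarOrderedRing A] {d v : A} (hd : 0 ≤ d) (h : star v * d * v = 0) :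
    d * v = 0 := by
  have hsqrt : CFC.sqrt d * v = 0 := by
    rw [← norm_eq_zero, ← sq_eq_zero_iff, ← CFC.norm_star_mul_mul_self_of_nonneg v hd, h,
      norm_zero]
  rw [← CFC.sqrt_mul_sqrt_self d hd, mul_assoc, hsqrt, mul_zero]
theorem mul_mul_mul_mul_eq_of_mul_eq_one {M : Type*} [Monoid M] {v w : M} (hwv : w * v = 1)
    (a : M) : w * (v * a * w) * v = a := by
  simp only [← mul_assoc, hwv, one_mul]
  rw [mul_assoc, hwv, mul_one]

theorem eq_mul_mul_add_of_intertwines {R : Type*} [Ring R] {a b v w : R} (hwv : w * v = 1)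
    (hbv : b * v = v * a) (hwb : w * b = a * w) :
    b = v * a * w + (1 - v * w) * b * (1 - v * w) := by
  have hleft : v * w * b = v * a * w := by rw [mul_assoc, hwb, mul_assoc]
  have hright : b * (v * w) = v * a * w := by rw [← mul_assoc, hbv]
  have hproj : v * w * (v * a * w) = v * a * w := by
    rw [show v * w * (v * a * w) = v * (w * v) * a * w by noncomm_ring, hwv, mul_one]
  calc b = v * a * w + (b - v * w * b - b * (v * w) + v * w * (b * (v * w))) := by
        rw [hleft, hright, hproj]; abel
    _ = v * a * w + (1 - v * w) * b * (1 - v * w) := by noncomm_ring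

section

variable {A : Type*} [CStarAlgebra A] [PartialOrder A] [StarOrderedRing A]
  {α : A →ₗ[ℂ] A} {v : A}

theorem map_eq_mul_mul_star_add_of_intertwines (hpos : ∀ a, 0 ≤ a → 0 ≤ α a)
    (hint : ∀ a, α a * v = v * a) (hv : star v * v = 1) (a : A) :
    α a = v * a * star v + (1 - v * star v) * α a * (1 - v * star v) := by
  refine eq_mul_mul_add_of_intertwines hv (hint a) ?_
  simpa [star_mul, α.map_star_of_map_nonneg hpos] using congr(star $(hint (star a)))

theorem mul_mul_star_le_of_intertwines (hpos : ∀ a, 0 ≤ a → 0 ≤ α a)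
    (hint : ∀ a, α a * v = v * a) (hv : star v * v = 1) {a : A} (ha : 0 ≤ a) :
    v * a * star v ≤ α a := by
  have hP : IsSelfAdjoint (1 - v * star v) := by simp [IsSelfAdjoint, star_mul]
  rw [← sub_nonneg, sub_eq_of_eq_add' (map_eq_mul_mul_star_add_of_intertwines hpos hint hv a)]
  simpa [hP.star_eq] using star_left_conjugate_nonneg (hpos a ha) (1 - v * star v)

theorem star_mul_map_mul_eq_of_mul_mul_star_le (hunital : α 1 = 1)
    (hle : ∀ a, 0 ≤ a → v * a * star v ≤ α a) (hv : star v * v = 1) {a : A} (ha : 0 ≤ a) :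
    star v * α a * v = a := by
  refine le_antisymm ?_ ?_
  · set c := algebraMap ℝ A ‖a‖ with hc_def
    have hc : α c = c := by
      rw [hc_def, Algebra.algebraMap_eq_smul_one, LinearMap.map_smul_of_tower, hunital]
    have hcv : star v * c * v = c := by
      rw [hc_def, mul_assoc, Algebra.commutes, ← mul_assoc, hv, one_mul]
    have h := star_left_conjugate_le_conjugate
      (hle (c - a) (sub_nonneg.mpr ha.isSelfAdjoint.le_algebraMap_norm_self)) v
    rw [mul_mul_mul_mul_eq_of_mul_eq_one hv, map_sub, hc, mul_sub, sub_mul, hcv] at h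
    exact sub_le_sub_iff_left c |>.mp h
  · simpa [mul_mul_mul_mul_eq_of_mul_eq_one hv] using
      star_left_conjugate_le_conjugate (hle a ha) v

theorem map_mul_eq_of_mul_mul_star_le (hunital : α 1 = 1)
    (hle : ∀ a, 0 ≤ a → v * a * star v ≤ α a) (hv : star v * v = 1) {a : A} (ha : 0 ≤ a) :
    α a * v = v * a := by
  have hD : (α a - v * a * star v) * v = 0 := by
    refine mul_eq_zero_of_star_mul_mul_eq_zero (sub_nonneg.mpr (hle a ha)) ?_
    rw [mul_sub, sub_mul, mul_mul_mul_mul_eq_of_mul_eq_one hv,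
      star_mul_map_mul_eq_of_mul_mul_star_le hunital hle hv ha, sub_self]
  rwa [sub_mul, sub_eq_zero, mul_assoc, hv, mul_one] at hD

theorem intertwines_of_mul_mul_star_le (hunital : α 1 = 1)
    (hle : ∀ a, 0 ≤ a → v * a * star v ≤ α a) (hv : star v * v = 1) (a : A) :
    α a * v = v * a := by
  have : LinearMap.mulRight ℂ v ∘ₗ α = LinearMap.mulLeft ℂ v :=
    LinearMap.ext_on CStarAlgebra.span_nonneg
      fun b hb ↦ map_mul_eq_of_mul_mul_star_le hunital hle hv hb
  exact congr($this a)

end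

/-- For a positive unital linear map `α` on `B(H)` and an isometry `V`, intertwining
(`α(A)V = VA` for all `A`) is equivalent to `V A V* ≤ α(A)` for all `A ≥ 0`; and in that
case `α(A) = V A V* + (I − VV*) α(A) (I − VV*)` for all `A`. -/
theorem stmt9 {H : Type*} [NormedAddCommGroup H] [InnerProductSpace ℂ H] [CompleteSpace H]
    (α : (H →L[ℂ] H) →ₗ[ℂ] (H →L[ℂ] H))
    (hpos : ∀ A : H →L[ℂ] H, 0 ≤ A → 0 ≤ α A)
    (hunital : α 1 = 1)
    (V : H →L[ℂ] H) (hV : adjoint V * V = 1) :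
    ((∀ A : H →L[ℂ] H, α A * V = V * A) ↔
      (∀ A : H →L[ℂ] H, 0 ≤ A → V * A * adjoint V ≤ α A)) ∧
    ((∀ A : H →L[ℂ] H, α A * V = V * A) →
      ∀ A : H →L[ℂ] H,
        α A = V * A * adjoint V + (1 - V * adjoint V) * α A * (1 - V * adjoint V)) := by
  simp only [← star_eq_adjoint] at hV ⊢
  exact ⟨⟨fun hint _ ↦ mul_mul_star_le_of_intertwines hpos hint hV,
    fun hle ↦ intertwines_of_mul_mul_star_le hunital hle hV⟩,
    fun hint ↦ map_eq_mul_mul_star_add_of_intertwines hpos hint hV⟩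
end

section
/- Let A and B be positive semidefinite n×n complex matrices. Then trace((A^{1/2} − B^{1/2})²) ≤ trace(((A − B)²)^{1/2}). (That is, the squared Frobenius norm of A^{1/2} − B^{1/2} is bounded by the trace norm of A − B.) -/
/-!
Write `C = √A`, `D = √B`, `X = C - D`, `K = C + D` and `S = sign X`. Then `-K ≤ X ≤ K`,
`-1 ≤ S ≤ 1`, `S` commutes with `X` and `X S = |X|`; since `A - B = (X K + K X) / 2`, cyclicity
of the trace gives `tr ((A - B) S) = tr (|X| K)`. Hence
`tr (X²) ≤ tr (|X| K) = tr ((A - B) S) ≤ tr |A - B|`, where both inequalities are instances of: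
if `H` is Hermitian and `-Y ≤ Z ≤ Y`, then `tr (H Z) ≤ tr (|H| Y)`. That in turn follows from
`tr (|H| Y) - tr (H Z) = tr (H⁺ (Y - Z)) + tr (H⁻ (Y + Z))` and `tr (P Q) ≥ 0` for positive `P`, `Q`.
-/

open Matrix ComplexOrder

/-- The positive semidefinite square root of a positive semidefinite matrix
(the definition Mathlib had as `Matrix.PosSemidef.sqrt`, since removed). -/
noncomputable def Matrix.PosSemidef.sqrt {n : Type*} [Fintype n] [DecidableEq n] {𝕜 : Type*}
    [RCLike 𝕜] {A : Matrix n n 𝕜} (hA : A.PosSemidef) : Matrix n n 𝕜 :=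
  hA.1.eigenvectorUnitary.1 * diagonal ((↑) ∘ (√·) ∘ hA.1.eigenvalues) *
  (star hA.1.eigenvectorUnitary : Matrix n n 𝕜)

open scoped MatrixOrder

section

variable {R A : Type*} {p : A → Prop} [CommSemiring R] [StarRing R] [MetricSpace R]
  [IsTopologicalSemiring R] [ContinuousStar R] [TopologicalSpace A] [Ring A] [StarRing A]
  [Algebra R A] [ContinuousFunctionalCalculus R A p]

lemma commute_self_cfc (f : R → R) (a : A) (ha : p a) : Commute a (cfc f a) := by
  conv_lhs => rw [← cfc_id' R a ha]
  exact cfc_commute_cfc _ _ _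

end

namespace Matrix

variable {n 𝕜 : Type*} [Fintype n] [DecidableEq n] [RCLike 𝕜]

lemma PosSemidef.sqrt_eq_cfcSqrt {A : Matrix n n 𝕜} (hA : A.PosSemidef) :
    hA.sqrt = CFC.sqrt A := by
  rw [CFC.sqrt_eq_real_sqrt A hA.nonneg, cfcₙ_eq_cfc, hA.1.cfc_eq, IsHermitian.cfc,
    Unitary.conjStarAlgAut_apply]
  rfl

lemma PosSemidef.posSemidef_sqrt {A : Matrix n n 𝕜} (hA : A.PosSemidef) :
    hA.sqrt.PosSemidef := by
  rw [hA.sqrt_eq_cfcSqrt]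
  exact (CFC.sqrt_nonneg A).posSemidef

lemma PosSemidef.sqrt_mul_self {A : Matrix n n 𝕜} (hA : A.PosSemidef) :
    hA.sqrt * hA.sqrt = A := by
  rw [hA.sqrt_eq_cfcSqrt]
  exact CFC.sqrt_mul_sqrt_self A hA.nonneg

lemma PosSemidef.sqrt_sq_eq_cfcAbs {H : Matrix n n 𝕜} (hH : H.IsHermitian)
    (hH2 : (H ^ 2).PosSemidef) : hH2.sqrt = CFC.abs H := by
  rw [hH2.sqrt_eq_cfcSqrt, CFC.abs, star_eq_conjTranspose, hH.eq, sq]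

lemma PosSemidef.trace_mul_nonneg {P Q : Matrix n n 𝕜} (hP : P.PosSemidef) (hQ : Q.PosSemidef) :
    0 ≤ (P * Q).trace := by
  obtain ⟨R, rfl⟩ := CStarAlgebra.nonneg_iff_eq_star_mul_self.mp hP.nonneg
  rw [Matrix.mul_assoc, trace_mul_comm, star_eq_conjTranspose]
  exact (hQ.mul_mul_conjTranspose_same R).trace_nonneg

lemma IsHermitian.trace_mul_le_trace_cfcAbs_mul {H Y Z : Matrix n n 𝕜} (hH : H.IsHermitian)
    (hZY : Z ≤ Y) (hYZ : -Y ≤ Z) : (H * Z).trace ≤ (CFC.abs H * Y).trace := by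
  have hH' : IsSelfAdjoint H := hH
  have hsplit : (CFC.abs H * Y).trace =
      (H * Z).trace + ((H⁺ * (Y - Z)).trace + (H⁻ * (Z - -Y)).trace) := calc
    (CFC.abs H * Y).trace = ((H⁺ + H⁻) * Y).trace := by rw [CFC.posPart_add_negPart H]
    _ = ((H⁺ - H⁻) * Z).trace + ((H⁺ * (Y - Z)).trace + (H⁻ * (Z - -Y)).trace) := by
      simp only [← trace_add]
      congr 1
      noncomm_ring
    _ = _ := by rw [CFC.posPart_sub_negPart H]
  rw [hsplit]
  exact le_add_of_nonneg_right <| add_nonneg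
    ((CFC.posPart_nonneg H).posSemidef.trace_mul_nonneg hZY)
    ((CFC.negPart_nonneg H).posSemidef.trace_mul_nonneg hYZ)

lemma trace_sq_sub_sq_mul_of_commute {R : Type*} [Field R] [CharZero R] {C D S : Matrix n n R}
    (hS : Commute (C - D) S) :
    ((C * C - D * D) * S).trace = ((C + D) * ((C - D) * S)).trace := by
  have hsymm : (C * C - D * D) * S + (C * C - D * D) * S =
      (C - D) * (C + D) * S + (C + D) * ((C - D) * S) := by
    noncomm_ring
  have hcyc : ((C - D) * (C + D) * S).trace = ((C + D) * ((C - D) * S)).trace := by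
    rw [Matrix.mul_assoc, trace_mul_comm, Matrix.mul_assoc, hS.eq]
  have htrace := congrArg trace hsymm
  rw [trace_add, trace_add, hcyc, ← two_mul, ← two_mul] at htrace
  exact mul_left_cancel₀ two_ne_zero htrace

-- The sign function is discontinuous, but every function is continuous on a finite spectrum.
lemma IsHermitian.mul_cfc_sign {X : Matrix n n 𝕜} (hX : X.IsHermitian) :
    X * cfc (fun x : ℝ => (SignType.sign x : ℝ)) X = CFC.abs X := by
  have hX' : IsSelfAdjoint X := hX
  conv_lhs => enter [1]; rw [← cfc_id' ℝ X]
  rw [← cfc_mul _ _ _ (by fun_prop) (X.finite_real_spectrum.continuousOn _),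
    CFC.abs_eq_cfc_norm X]
  exact cfc_congr fun x _ => self_mul_sign x

lemma IsHermitian.neg_one_le_cfc_sign {X : Matrix n n 𝕜} (hX : X.IsHermitian) :
    -1 ≤ cfc (fun x : ℝ => (SignType.sign x : ℝ)) X := by
  have h := algebraMap_le_cfc (fun x : ℝ => (SignType.sign x : ℝ)) (-1) X
    (fun x _ => by cases SignType.sign x <;> simp) (X.finite_real_spectrum.continuousOn _) hX
  rwa [map_neg, map_one] at h

lemma cfc_sign_le_one (X : Matrix n n 𝕜) : cfc (fun x : ℝ => (SignType.sign x : ℝ)) X ≤ 1 :=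
  cfc_le_one _ X fun x _ => by cases SignType.sign x <;> simp

end Matrix

/-- For positive semidefinite complex matrices `A`, `B`,
`trace((A^{1/2} − B^{1/2})²) ≤ trace(((A − B)²)^{1/2})`: the squared Frobenius norm of
`A^{1/2} − B^{1/2}` is bounded by the trace norm of `A − B`.  (Both traces are real and
the inequality is in the standard order on `ℂ`.) -/
theorem stmt10 {n : ℕ} (A B : Matrix (Fin n) (Fin n) ℂ)
    (hA : A.PosSemidef) (hB : B.PosSemidef) (hAB : ((A - B) ^ 2).PosSemidef) :
    ((hA.sqrt - hB.sqrt) ^ 2).trace ≤ hAB.sqrt.trace := by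
  set C := hA.sqrt
  set D := hB.sqrt
  set S := cfc (fun x : ℝ => (SignType.sign x : ℝ)) (C - D)
  have hC : C.PosSemidef := hA.posSemidef_sqrt
  have hD : D.PosSemidef := hB.posSemidef_sqrt
  have hX : (C - D).IsHermitian := hC.1.sub hD.1
  have hlower : -(C + D) ≤ C - D := by
    rw [neg_add']
    exact sub_le_sub_right (neg_le_self hC.nonneg) D
  have hupper : C - D ≤ C + D :=
    (sub_le_self C hD.nonneg).trans (le_add_of_nonneg_right hD.nonneg)
  have hdiff : A - B = C * C - D * D := by rw [hA.sqrt_mul_self, hB.sqrt_mul_self]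
  calc ((C - D) ^ 2).trace
      ≤ (CFC.abs (C - D) * (C + D)).trace :=
        sq (C - D) ▸ hX.trace_mul_le_trace_cfcAbs_mul hupper hlower
    _ = ((A - B) * S).trace := by
      rw [hdiff, trace_sq_sub_sq_mul_of_commute (commute_self_cfc _ _ hX.isSelfAdjoint),
        hX.mul_cfc_sign, trace_mul_comm]
    _ ≤ (CFC.abs (A - B) * 1).trace :=
      (hA.1.sub hB.1).trace_mul_le_trace_cfcAbs_mul (cfc_sign_le_one _) hX.neg_one_le_cfc_sign
    _ = hAB.sqrt.trace := by rw [mul_one, hAB.sqrt_sq_eq_cfcAbs (hA.1.sub hB.1)]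
end

section
/- Let g : (0,∞) → ℂ be a measurable function such that for every a > 0 the truncation g·1_{(a,∞)} belongs to L²((0,∞)), but ∫₀^∞ |g(x)|² dx = ∞. For a > 0 let M_a = { f ∈ L²((0,∞)) : f = 0 almost everywhere on (0,a) and ∫_a^∞ conj(g(x)) f(x) dx = 0 }. Then the union ⋃_{a>0} M_a is dense in L²((0,∞)). -/
/-!
Cut `f ∈ L²` off near `0`: `u = f·1_{(a,∞)}` is close to `f` for small `a`.
Since `∫₀^a |g|² = ∞`, for small `b < a` the function `v = g·1_{(b,a]}` has arbitrarily
large norm. With `G_t = g·1_{(t,∞)}` we have `⟪G_b, v⟫ = ‖v‖²`, so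
`u - (⟪G_b, u⟫ / ‖v‖²) v` lies in `M_b`, and the correction term has norm
`‖⟪G_b, u⟫‖ / ‖v‖ = ‖⟪G_a, u⟫‖ / ‖v‖`, whose numerator does not depend on `b`.
-/

open MeasureTheory Set
open scoped ENNReal

variable {α E : Type*} [MeasurableSpace α] {μ : Measure α}

lemma eLpNorm_two_sq [NormedAddCommGroup E] (f : α → E) :
    eLpNorm f 2 μ ^ 2 = ∫⁻ x, ‖f x‖ₑ ^ 2 ∂μ := by
  simpa using eLpNorm_nnreal_pow_eq_lintegral (f := f) (μ := μ) (p := 2) two_ne_zero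

lemma withDensity_enorm_sq_apply [NormedAddCommGroup E] (f : α → E) {s : Set α}
    (hs : MeasurableSet s) :
    μ.withDensity (fun x => ‖f x‖ₑ ^ 2) s = eLpNorm (s.indicator f) 2 μ ^ 2 := by
  rw [withDensity_apply _ hs, eLpNorm_indicator_eq_eLpNorm_restrict hs, eLpNorm_two_sq]

lemma MeasureTheory.MemLp.indicator_of_subset [NormedAddCommGroup E] {p : ℝ≥0∞} {f : α → E}
    {s t : Set α}    (hf : MemLp (t.indicator f) p μ) (hs : MeasurableSet s) (hst : s ⊆ t) :
    MemLp (s.indicator f) p μ := by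
  simpa [indicator_indicator, inter_eq_left.2 hst] using hf.indicator hs

lemma exists_lt_measure_Ioc {ν : Measure ℝ} {a : ℝ} {N : ℝ≥0∞} (hN : N < ν (Ioc 0 a)) :
    ∃ b ∈ Ioo 0 a, N < ν (Ioc b a) := by
  have hunion : ⋃ n : ℕ, Ioc (1 / (n + 1 : ℝ)) a = Ioc 0 a := by
    ext x
    simp only [mem_iUnion, mem_Ioc]
    refine ⟨fun ⟨n, hn, hxa⟩ => ⟨lt_trans (by positivity) hn, hxa⟩, fun ⟨hx, hxa⟩ => ?_⟩
    obtain ⟨n, hn⟩ := exists_nat_one_div_lt hx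
    exact ⟨n, hn, hxa⟩
  have hmono : Monotone fun n : ℕ => Ioc (1 / (n + 1 : ℝ)) a := fun m n hmn =>
    Ioc_subset_Ioc_left (Nat.one_div_le_one_div hmn)
  have := tendsto_measure_iUnion_atTop (μ := ν) hmono
  rw [hunion] at this
  obtain ⟨n, hn⟩ := (this.eventually (eventually_gt_nhds hN)).exists
  refine ⟨1 / (n + 1), ⟨by positivity, ?_⟩, hn⟩
  exact nonempty_Ioc.1 (nonempty_of_measure_ne_zero (ne_bot_of_gt hn))

namespace MeasureTheory.L2

variable {𝕜 : Type*} [RCLike 𝕜] [NormedAddCommGroup E] [InnerProductSpace 𝕜 E]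

lemma inner_eq_inner_of_ae {w w' u : Lp E 2 μ} (h : ∀ᵐ x ∂μ, u x ≠ 0 → w x = w' x) :
    inner 𝕜 w u = inner 𝕜 w' u := by
  simp only [inner_def]
  refine integral_congr_ae ?_
  filter_upwards [h] with x hx
  by_cases hu : u x = 0
  · simp [hu]
  · rw [hx hu]

end MeasureTheory.L2

section

variable {𝕜 : Type*} [RCLike 𝕜] [NormedAddCommGroup E] [InnerProductSpace 𝕜 E]

lemma inner_sub_inner_div_inner_self_smul_eq_zero {w v : E} (hv : v ≠ 0)
    (hwv : inner 𝕜 w v = inner 𝕜 v v) (u : E) :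
    inner 𝕜 w (u - (inner 𝕜 w u / inner 𝕜 v v) • v) = 0 := by
  rw [inner_sub_right, inner_smul_right, hwv, div_mul_cancel₀ _ (inner_self_ne_zero.2 hv),
    sub_self]

lemma norm_div_inner_self_smul (z : 𝕜) (v : E) :
    ‖(z / inner 𝕜 v v) • v‖ = ‖z‖ / ‖v‖ := by
  rcases eq_or_ne v 0 with rfl | hv
  · simp
  rw [norm_smul, norm_div, inner_self_eq_norm_sq_to_K, norm_pow, RCLike.norm_ofReal, abs_norm]
  field_simp

end

lemma setIntegral_conj_mul_eq_inner {g : α → ℂ} {s : Set α} (hs : MeasurableSet s)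
    (hg : MemLp (s.indicator g) 2 μ) (f : Lp ℂ 2 μ) :
    ∫ x in s, (starRingEnd ℂ) (g x) * f x ∂μ = inner ℂ (hg.toLp _) f := by
  rw [L2.inner_def, ← integral_indicator hs]
  refine integral_congr_ae ?_
  filter_upwards [hg.coeFn_toLp] with x hx
  by_cases hxs : x ∈ s <;> simp [hx, hxs, mul_comm]

lemma volume_restrict_Ioi_zero_Iic (a : ℝ) :
    volume.restrict (Ioi (0 : ℝ)) (Iic a) = ENNReal.ofReal a := by
  rw [Measure.restrict_apply measurableSet_Iic, Iic_inter_Ioi, Real.volume_Ioc, sub_zero]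

lemma exists_dist_lt_vanishing_on_Iic [NormedAddCommGroup E] {p : ℝ≥0∞} [Fact (1 ≤ p)]
    (hp : p ≠ ∞) (f : Lp E p (volume.restrict (Ioi (0 : ℝ)))) {ε : ℝ} (hε : 0 < ε) :
    ∃ a > 0, ∃ u : Lp E p (volume.restrict (Ioi (0 : ℝ))),
      (∀ᵐ x ∂volume.restrict (Ioi 0), x ≤ a → u x = 0) ∧ dist f u < ε := by
  obtain ⟨δ, hδ, hsmall⟩ := (Lp.memLp f).eLpNorm_indicator_le Fact.out hp (half_pos hε)
  have hu : MemLp ((Ioi δ).indicator f) p (volume.restrict (Ioi 0)) :=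
    (Lp.memLp f).indicator measurableSet_Ioi
  refine ⟨δ, hδ, hu.toLp _, ?_, ?_⟩
  · filter_upwards [hu.coeFn_toLp] with x hx hxδ
    exact hx.trans (indicator_of_notMem (not_lt.2 hxδ) _)
  have hdiff : ⇑f - ⇑(hu.toLp _) =ᵐ[volume.restrict (Ioi 0)] (Iic δ).indicator f := by
    filter_upwards [hu.coeFn_toLp] with x hx
    rw [Pi.sub_apply, hx, ← compl_Ioi, indicator_compl, Pi.sub_apply]
  rw [Lp.dist_def, eLpNorm_congr_ae hdiff]
  have hIic := hsmall _ measurableSet_Iic (volume_restrict_Ioi_zero_Iic δ).le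
  exact (ENNReal.toReal_le_of_le_ofReal (half_pos hε).le hIic).trans_lt (half_lt_self hε)

/-- The space `M_a` of the statement. -/
def truncOrthogonal (g : ℝ → ℂ) (a : ℝ) :
    Set (Lp ℂ 2 (volume.restrict (Ioi (0 : ℝ)))) :=
  { f | (∀ᵐ x ∂(volume.restrict (Ioi (0 : ℝ))), x ∈ Ioo 0 a → f x = 0) ∧
    ∫ x in Ioi a, (starRingEnd ℂ) (g x) * f x = 0 }

section

variable {g : ℝ → ℂ}

lemma exists_lt_eLpNorm_indicator_Ioc
    (htrunc : ∀ a : ℝ, 0 < a → MemLp ((Ioi a).indicator g) 2 (volume.restrict (Ioi (0 : ℝ))))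
    (hdiv : ∫⁻ x in Ioi (0 : ℝ), (‖g x‖₊ : ℝ≥0∞) ^ 2 = ⊤) {a : ℝ} (ha : 0 < a)
    {N : ℝ≥0∞} (hN : N ≠ ⊤) :
    ∃ b ∈ Ioo 0 a, N < eLpNorm ((Ioc b a).indicator g) 2 (volume.restrict (Ioi 0)) := by
  set ν := (volume.restrict (Ioi (0 : ℝ))).withDensity fun x => ‖g x‖ₑ ^ 2
  have hIoi : ν (Ioi a) ≠ ⊤ := by
    rw [withDensity_enorm_sq_apply _ measurableSet_Ioi]
    exact ENNReal.pow_ne_top (htrunc a ha).eLpNorm_ne_top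
  have hIic : ν (Iic 0) = 0 :=
    withDensity_absolutelyContinuous _ _ (by simpa using volume_restrict_Ioi_zero_Iic 0)
  have huniv : ν univ = ⊤ := by
    rwa [withDensity_apply _ MeasurableSet.univ, Measure.restrict_univ]
  have hIoc : ν (Ioc 0 a) = ⊤ := by
    have hIic_a : ν (Iic a) = ⊤ := by
      rw [← compl_Ioi, measure_compl measurableSet_Ioi hIoi, huniv, ENNReal.top_sub hIoi]
    rw [← top_le_iff, ← hIic_a, ← Iic_union_Ioc_eq_Iic ha.le]
    exact (measure_union_le _ _).trans (by rw [hIic, zero_add])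
  have hN2 : N ^ 2 < ν (Ioc 0 a) := hIoc ▸ ENNReal.pow_lt_top hN.lt_top
  obtain ⟨b, hb, hlt⟩ := exists_lt_measure_Ioc hN2
  rw [withDensity_enorm_sq_apply _ measurableSet_Ioc] at hlt
  exact ⟨b, hb, lt_of_pow_lt_pow_left' 2 hlt⟩

lemma exists_truncOrthogonal_dist_lt
    (htrunc : ∀ a : ℝ, 0 < a → MemLp ((Ioi a).indicator g) 2 (volume.restrict (Ioi (0 : ℝ))))
    (hdiv : ∫⁻ x in Ioi (0 : ℝ), (‖g x‖₊ : ℝ≥0∞) ^ 2 = ⊤) {a : ℝ} (ha : 0 < a)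
    {u : Lp ℂ 2 (volume.restrict (Ioi (0 : ℝ)))}
    (hu : ∀ᵐ x ∂volume.restrict (Ioi (0 : ℝ)), x ≤ a → u x = 0) {δ : ℝ} (hδ : 0 < δ) :
    ∃ b > 0, ∃ f ∈ truncOrthogonal g b, dist u f < δ := by
  set c := inner ℂ ((htrunc a ha).toLp _) u
  obtain ⟨b, hb, hlt⟩ :=
    exists_lt_eLpNorm_indicator_Ioc htrunc hdiv ha (ENNReal.ofReal_ne_top (r := ‖c‖ / δ))
  have hv := (htrunc b hb.1).indicator_of_subset measurableSet_Ioc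
    (Ioc_subset_Ioi_self : Ioc b a ⊆ Ioi b)
  set v := hv.toLp _
  set Gb := (htrunc b hb.1).toLp _
  have hcv : ‖c‖ / δ < ‖v‖ := by
    rwa [Lp.norm_toLp, ← ENNReal.ofReal_lt_iff_lt_toReal (by positivity) hv.eLpNorm_ne_top]
  have hv0 : v ≠ 0 := norm_pos_iff.1 ((div_nonneg (norm_nonneg c) hδ.le).trans_lt hcv)
  have hGbv : inner ℂ Gb v = inner ℂ v v := by
    refine L2.inner_eq_inner_of_ae ?_
    filter_upwards [(htrunc b hb.1).coeFn_toLp, hv.coeFn_toLp] with x hGbx hvx hx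
    rw [hvx] at hx ⊢
    have hxba := mem_of_indicator_ne_zero hx
    rw [hGbx, indicator_of_mem (Ioc_subset_Ioi_self hxba), indicator_of_mem hxba]
  have hGbu : inner ℂ Gb u = c := by
    refine L2.inner_eq_inner_of_ae ?_
    filter_upwards [(htrunc b hb.1).coeFn_toLp, (htrunc a ha).coeFn_toLp, hu]
      with x hGbx hGax hux hx
    have hxa : a < x := not_le.1 (mt hux hx)
    rw [hGbx, hGax, indicator_of_mem (mem_Ioi.2 hxa),
      indicator_of_mem (mem_Ioi.2 (hb.2.trans hxa))]
  refine ⟨b, hb.1, u - (inner ℂ Gb u / inner ℂ v v) • v, ⟨?_, ?_⟩, ?_⟩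
  · filter_upwards [Lp.coeFn_sub u ((inner ℂ Gb u / inner ℂ v v) • v), Lp.coeFn_smul
      (inner ℂ Gb u / inner ℂ v v) v, hu, hv.coeFn_toLp] with x hsub hsmul hux hvx hx
    rw [hsub, Pi.sub_apply, hsmul, Pi.smul_apply, hux (hx.2.trans hb.2).le, hvx,
      indicator_of_notMem (fun h => (not_lt.2 hx.2.le) h.1), smul_zero, sub_zero]
  · rw [← Measure.restrict_restrict_of_subset (Ioi_subset_Ioi hb.1.le),
      setIntegral_conj_mul_eq_inner measurableSet_Ioi (htrunc b hb.1)]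
    exact inner_sub_inner_div_inner_self_smul_eq_zero hv0 hGbv u
  · rw [dist_eq_norm, sub_sub_cancel, norm_div_inner_self_smul, hGbu,
      div_lt_iff₀ (norm_pos_iff.2 hv0)]
    rwa [div_lt_iff₀ hδ, mul_comm] at hcv

end

theorem stmt13_general (g : ℝ → ℂ)
    (htrunc : ∀ a : ℝ, 0 < a →
      MemLp (Set.indicator (Set.Ioi a) g) 2 (volume.restrict (Set.Ioi (0 : ℝ))))
    (hdiv : ∫⁻ x in Set.Ioi (0 : ℝ), (‖g x‖₊ : ENNReal) ^ 2 = ⊤) :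
    Dense (⋃ (a : ℝ) (_ : 0 < a),
      { f : Lp ℂ 2 (volume.restrict (Set.Ioi (0 : ℝ))) |
        (∀ᵐ x ∂(volume.restrict (Set.Ioi (0 : ℝ))), x ∈ Set.Ioo 0 a → f x = 0) ∧
        ∫ x in Set.Ioi a, (starRingEnd ℂ) (g x) * f x = 0 }) := by
  rw [Metric.dense_iff]
  intro f ε hε
  obtain ⟨a, ha, u, hu, hfu⟩ :=
    exists_dist_lt_vanishing_on_Iic ENNReal.ofNat_ne_top f (half_pos hε)
  obtain ⟨b, hb, f', hf', huf'⟩ :=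
    exists_truncOrthogonal_dist_lt htrunc hdiv ha hu (half_pos hε)
  refine ⟨f', ?_, mem_iUnion₂.2 ⟨b, hb, hf'⟩⟩
  rw [Metric.mem_ball, dist_comm]
  linarith [dist_triangle f u f']

/-- If `g` is measurable on `(0,∞)` with every truncation `g·1_{(a,∞)}` in `L²` but
`∫₀^∞ |g|² = ∞`, then the union over `a > 0` of the subspaces
`M_a = {f ∈ L²((0,∞)) : f = 0 a.e. on (0,a), ∫_a^∞ conj(g) f = 0}` is dense in `L²((0,∞))`. -/
theorem stmt13 (g : ℝ → ℂ) (hmeas : Measurable g)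
    (htrunc : ∀ a : ℝ, 0 < a →
      MemLp (Set.indicator (Set.Ioi a) g) 2 (volume.restrict (Set.Ioi (0 : ℝ))))
    (hdiv : ∫⁻ x in Set.Ioi (0 : ℝ), (‖g x‖₊ : ENNReal) ^ 2 = ⊤) :
    Dense (⋃ (a : ℝ) (_ : 0 < a),
      { f : Lp ℂ 2 (volume.restrict (Set.Ioi (0 : ℝ))) |
        (∀ᵐ x ∂(volume.restrict (Set.Ioi (0 : ℝ))), x ∈ Set.Ioo 0 a → f x = 0) ∧
        ∫ x in Set.Ioi a, (starRingEnd ℂ) (g x) * f x = 0 }) :=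
  stmt13_general g htrunc hdiv
end
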